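/- arXiv:math/0409595 — 4 statements merged into one kernel-verified Lean document; each statement's English description precedes it below -/
import Mathlib

section
/- For n ≥ 2 and ω = exp(2πi/n), and for commuting variables x, y, the product ∏_{j=0}^{n-1} (1 - (ω^j x + ω^{-j} y) b) is a polynomial in b whose coefficient of b^k for 1 ≤ k ≤ n-1 lies in ℤ[xy], i.e. is an integer polynomial in the product xy alone, and whose coefficient of b^n equals -x^n - y^n plus an integer polynomial in xy. -/
open Polynomial

lemma aux_dickson_natDegree_le {R : Type*} [CommRing R] (k : ℕ) (a : R) :
    ∀ n, (dickson k a n).natDegree ≤ n := by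
  intro n
  induction n using Nat.twoStepInduction with
  | zero => exact le_trans (le_of_eq (by rw [dickson_zero])) (le_trans (natDegree_sub_le _ _) (by simp [natDegree_natCast]))
  | one => rw [dickson_one]; exact natDegree_X_le
  | more n ih1 ih2 =>
    rw [dickson_add_two]
    refine le_trans (natDegree_sub_le _ _) (max_le ?_ ?_)
    · refine le_trans natDegree_mul_le ?_
      have h := natDegree_X_le (R := R)
      omega
    · refine le_trans natDegree_mul_le ?_
      have h : (C a).natDegree = 0 := natDegree_C a
      omega

lemma aux_dickson_coeff {R : Type*} [CommRing R] (k : ℕ) (a : R) :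
    ∀ n, (dickson k a (n + 1)).coeff (n + 1) = 1 := by
  intro n
  induction n with
  | zero => simp [dickson_one]
  | succ m ih =>
    rw [show m + 1 + 1 = m + 2 from rfl, dickson_add_two, coeff_sub, coeff_X_mul, ih,
      coeff_C_mul, coeff_eq_zero_of_natDegree_lt (lt_of_le_of_lt (aux_dickson_natDegree_le k a m) (by omega))]
    ring

lemma aux_dickson_eval {R : Type*} [CommRing R] (s t : R) :
    ∀ n, (dickson 1 (s * t) n).eval (s + t) = s ^ n + t ^ n := by
  intro n
  induction n using Nat.twoStepInduction with
  | zero => norm_num [dickson_zero]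
  | one => simp [dickson_one]
  | more n ih1 ih2 =>
    rw [dickson_add_two]
    simp only [eval_sub, eval_mul, eval_X, eval_C, ih1, ih2]
    ring

lemma aux_reverse_X_sub_C {R : Type*} [CommRing R] [Nontrivial R] (a : R) :
    (X - C a).reverse = 1 - C a * X := by
  ext k
  rw [coeff_reverse, natDegree_X_sub_C]
  rcases k with _ | _ | k <;> simp [revAt_le, revAt_eq_self_of_lt, coeff_one, coeff_X]

lemma aux_reverse_prod {R : Type*} [CommRing R] [IsDomain R] {ι : Type*} (s : Finset ι)
    (f : ι → R[X]) : (∏ i ∈ s, f i).reverse = ∏ i ∈ s, (f i).reverse := by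
  classical
  induction s using Finset.induction_on with
  | empty => simpa using (reverse_C (1 : R))
  | insert _ _ h ih => rw [Finset.prod_insert h, Finset.prod_insert h, reverse_mul_of_domain, ih]

open Polynomial MvPolynomial




open Polynomial MvPolynomial

/-- For `n ≥ 2` and `ω = exp(2πi/n)`, the product `∏_{j=0}^{n-1} (1 - (ω^j x + ω^{-j} y) b)`,
viewed as a polynomial in `b` with coefficients in `ℂ[x,y]`, has coefficient of `b^k` for
`1 ≤ k ≤ n-1` an integer polynomial in `xy` alone, and coefficient of `b^n` equal to
`-x^n - y^n` plus an integer polynomial in `xy`. -/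
theorem stmt1 (n : ℕ) (hn : 2 ≤ n) :
    ∀ ω : ℂ, ω = Complex.exp (2 * Real.pi * Complex.I / n) →
    ∀ x y : MvPolynomial (Fin 2) ℂ, x = MvPolynomial.X 0 → y = MvPolynomial.X 1 →
    ∀ P : Polynomial (MvPolynomial (Fin 2) ℂ),
      P = ∏ j ∈ Finset.range n,
            (1 - Polynomial.C (MvPolynomial.C (ω ^ j) * x + MvPolynomial.C (ω⁻¹ ^ j) * y)
                  * Polynomial.X) →
    ((∀ k : ℕ, 1 ≤ k → k ≤ n - 1 →
        ∃ q : Polynomial ℤ, P.coeff k = Polynomial.aeval (x * y) q) ∧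
      (∃ q : Polynomial ℤ, P.coeff n = -x ^ n - y ^ n + Polynomial.aeval (x * y) q)) := by
  intro ω hω x y hx hy P hP
  have hn0 : (n : ℕ) ≠ 0 := by omega
  have hprim : IsPrimitiveRoot ω n := by rw [hω]; exact Complex.isPrimitiveRoot_exp n hn0
  have hωn : ω ^ n = 1 := hprim.pow_eq_one
  have hω0 : ω ≠ 0 := fun h => by simp [h, zero_pow hn0] at hωn
  set a : ℕ → MvPolynomial (Fin 2) ℂ :=
    fun j => MvPolynomial.C (ω ^ j) * x + MvPolynomial.C (ω⁻¹ ^ j) * y with ha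
  set F : Polynomial (MvPolynomial (Fin 2) ℂ) :=
    ∏ j ∈ Finset.range n, (Polynomial.X - Polynomial.C (a j)) with hF
  have hP2 : P = ∏ j ∈ Finset.range n, (1 - Polynomial.C (a j) * Polynomial.X) := by
    rw [hP]
  have hFmonic : F.Monic := monic_prod_of_monic _ _ fun j _ => monic_X_sub_C _
  have hFdeg : F.natDegree = n := by
    rw [hF, natDegree_prod_of_monic _ _ fun j _ => monic_X_sub_C _]
    simp [natDegree_X_sub_C]
  -- key identity
  have hkey : F = Polynomial.dickson 1 (x * y) n - Polynomial.C (x ^ n + y ^ n) := by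
    rw [← sub_eq_zero]
    set G := F - (Polynomial.dickson 1 (x * y) n - Polynomial.C (x ^ n + y ^ n)) with hG
    by_contra hG0
    have hGle : G.natDegree ≤ n := by
      refine le_trans (natDegree_sub_le _ _) (max_le (le_of_eq hFdeg) ?_)
      refine le_trans (natDegree_sub_le _ _) (max_le (aux_dickson_natDegree_le 1 _ n) ?_)
      simp only [natDegree_C]
      omega
    have hGcoeff : G.coeff n = 0 := by
      obtain ⟨m, rfl⟩ : ∃ m, n = m + 1 := ⟨n - 1, by omega⟩
      rw [hG, Polynomial.coeff_sub, Polynomial.coeff_sub, aux_dickson_coeff,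
        Polynomial.coeff_C, if_neg (by omega), ← hFdeg, hFmonic.coeff_natDegree]
      ring
    have hGlt : G.natDegree < n := by
      rcases lt_or_eq_of_le hGle with h | h
      · exact h
      · exact absurd (Polynomial.leadingCoeff_eq_zero.mp
          (by rw [Polynomial.leadingCoeff, h, hGcoeff])) hG0
    have hinj : Function.Injective (fun j : Fin n => a j) := by
      intro i j hij
      have hev : ∀ m : ℕ, MvPolynomial.eval (fun i : Fin 2 => if i = 0 then (1 : ℂ) else 0) (a m)
          = ω ^ m := by
        intro m
        simp [ha, hx, hy]
      have h3 := congrArg (MvPolynomial.eval (fun i : Fin 2 => if i = 0 then (1 : ℂ) else 0)) hij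
      rw [hev, hev] at h3
      exact Fin.ext (hprim.pow_inj i.2 j.2 h3)
    have heval : ∀ j : Fin n, G.eval (a j) = 0 := by
      intro j
      have hFej : F.eval (a j) = 0 := by
        rw [hF, Polynomial.eval_prod]
        exact Finset.prod_eq_zero (Finset.mem_range.mpr j.2) (by simp)
      have h1 : (ω ^ j.1) ^ n = 1 := by
        rw [← pow_mul, mul_comm, pow_mul, hωn, one_pow]
      have h2 : (ω⁻¹ ^ j.1) ^ n = 1 := by
        rw [inv_pow, inv_pow, h1, inv_one]
      have hst : (MvPolynomial.C (ω ^ j.1) * x) * (MvPolynomial.C (ω⁻¹ ^ j.1) * y) = x * y := by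
        have h4 : (ω : ℂ) ^ j.1 * ω⁻¹ ^ j.1 = 1 := by
          rw [← mul_pow, mul_inv_cancel₀ hω0, one_pow]
        rw [show (MvPolynomial.C (ω ^ j.1) * x) * (MvPolynomial.C (ω⁻¹ ^ j.1) * y)
            = MvPolynomial.C (ω ^ j.1 * ω⁻¹ ^ j.1) * (x * y) by rw [MvPolynomial.C_mul]; ring,
          h4]
        simp
      have hDej : (Polynomial.dickson 1 (x * y) n).eval (a j) = x ^ n + y ^ n := by
        rw [← hst, ha]
        rw [aux_dickson_eval (MvPolynomial.C (ω ^ j.1) * x) (MvPolynomial.C (ω⁻¹ ^ j.1) * y) n]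
        rw [mul_pow, mul_pow, ← MvPolynomial.C_pow, ← MvPolynomial.C_pow, h1, h2]
        simp
      rw [hG, Polynomial.eval_sub, Polynomial.eval_sub, hFej, hDej, Polynomial.eval_C]
      ring
    exact hG0 (Polynomial.eq_zero_of_natDegree_lt_card_of_eval_eq_zero G hinj heval
      (by simpa using hGlt))
  -- relate P to F by reversal
  have hPrev : P = F.reverse := by
    rw [hP2, hF, aux_reverse_prod]
    exact Finset.prod_congr rfl fun j _ => (aux_reverse_X_sub_C (a j)).symm
  have hPco : ∀ k, k ≤ n → P.coeff k = F.coeff (n - k) := by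
    intro k hk
    rw [hPrev, Polynomial.coeff_reverse, hFdeg, Polynomial.revAt_le hk]
  set f : Polynomial ℤ →+* MvPolynomial (Fin 2) ℂ :=
    (Polynomial.aeval (R := ℤ) (x * y)).toRingHom with hf
  have hmap : Polynomial.map f (Polynomial.dickson 1 (Polynomial.X : Polynomial ℤ) n)
      = Polynomial.dickson 1 (x * y) n := by
    rw [Polynomial.map_dickson]
    congr 1
    simp [hf]
  have haev : ∀ q : Polynomial ℤ, f q = Polynomial.aeval (x * y) q := fun q => rfl
  constructor
  · intro k hk1 hk2
    refine ⟨(Polynomial.dickson 1 (Polynomial.X : Polynomial ℤ) n).coeff (n - k), ?_⟩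
    rw [hPco k (by omega), hkey, Polynomial.coeff_sub, Polynomial.coeff_C,
      if_neg (by omega), ← hmap, Polynomial.coeff_map, haev]
    ring
  · refine ⟨(Polynomial.dickson 1 (Polynomial.X : Polynomial ℤ) n).coeff 0, ?_⟩
    rw [hPco n le_rfl, Nat.sub_self, hkey, Polynomial.coeff_sub, Polynomial.coeff_C, if_pos rfl,
      ← hmap, Polynomial.coeff_map, haev]
    ring
end

section
/- Let ω = i. For a nonzero complex number z and complex b, (1/4) Σ_{k=0}^{3} 1/(1 - (i^k z + i^{-k} z^{-1}) b) = (1 - 2b^2)/(1 - 4b^2 + 2b^4 - b^4(z^4 + z^{-4})), as an identity of rational functions valid wherever both sides are defined. -/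
/-!
Write `u_k = ωᵏ x + ω⁻ᵏ y` with `ω² = -1` and `x y = 1`. Then `u₂ = -u₀` and `u₃ = -u₁`, so with
`a = u₀ b`, `c = u₁ b` the four terms pair up as `1/(1 - a) + 1/(1 + a) = 2/(1 - a²)`.
For `w = x² + y²` one has `a² = (2 + w) b²` and `c² = (2 - w) b²`, so `(1 - a²)(1 - c²)` is the
denominator `1 - 4b² + 2b⁴ - b⁴(x⁴ + y⁴)`; in particular that denominator cannot vanish.
-/

open Finset

section
variable {K : Type*} [Field K]

theorem one_div_one_sub_add_one_div_one_add {a : K} (h₁ : 1 - a ≠ 0) (h₂ : 1 + a ≠ 0) :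
    1 / (1 - a) + 1 / (1 + a) = 2 / (1 - a ^ 2) := by
  rw [show 1 - a ^ 2 = (1 - a) * (1 + a) by ring, div_add_div _ _ h₁ h₂]
  ring

theorem sum_range_four_one_div_one_sub_mul {ω x y b : K} (hω : ω ^ 2 = -1) (hxy : x * y = 1)
    (h : ∀ k ∈ range 4, 1 - (ω ^ k * x + ω⁻¹ ^ k * y) * b ≠ 0) :
    ∑ k ∈ range 4, 1 / (1 - (ω ^ k * x + ω⁻¹ ^ k * y) * b)
      = 4 * (1 - 2 * b ^ 2) / (1 - 4 * b ^ 2 + 2 * b ^ 4 - b ^ 4 * (x ^ 4 + y ^ 4)) := by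
  have hinv : ω⁻¹ = -ω := inv_eq_of_mul_eq_one_right (by linear_combination -hω)
  set a := (x + y) * b
  set c := ω * (x - y) * b
  have e₀ : 1 - (ω ^ 0 * x + (-ω) ^ 0 * y) * b = 1 - a := by ring
  have e₁ : 1 - (ω ^ 1 * x + (-ω) ^ 1 * y) * b = 1 - c := by ring
  have e₂ : 1 - (ω ^ 2 * x + (-ω) ^ 2 * y) * b = 1 + a := by
    linear_combination (-(x + y) * b) * hω
  have e₃ : 1 - (ω ^ 3 * x + (-ω) ^ 3 * y) * b = 1 + c := by
    linear_combination (-ω * (x - y) * b) * hω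
  simp only [hinv] at h ⊢
  have ha₁ := e₀ ▸ h 0 (by simp)
  have hc₁ := e₁ ▸ h 1 (by simp)
  have ha₂ := e₂ ▸ h 2 (by simp)
  have hc₂ := e₃ ▸ h 3 (by simp)
  have ha : 1 - a ^ 2 ≠ 0 := by
    rw [show 1 - a ^ 2 = (1 - a) * (1 + a) by ring]; exact mul_ne_zero ha₁ ha₂
  have hc : 1 - c ^ 2 ≠ 0 := by
    rw [show 1 - c ^ 2 = (1 - c) * (1 + c) by ring]; exact mul_ne_zero hc₁ hc₂
  have ha_sq : a ^ 2 = (2 + (x ^ 2 + y ^ 2)) * b ^ 2 := by linear_combination 2 * b ^ 2 * hxy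
  have hc_sq : c ^ 2 = (2 - (x ^ 2 + y ^ 2)) * b ^ 2 := by
    linear_combination (x - y) ^ 2 * b ^ 2 * hω + 2 * b ^ 2 * hxy
  have hden :
      (1 - a ^ 2) * (1 - c ^ 2) = 1 - 4 * b ^ 2 + 2 * b ^ 4 - b ^ 4 * (x ^ 4 + y ^ 4) := by
    rw [ha_sq, hc_sq]; linear_combination (-b ^ 4 * 2 * (x * y + 1)) * hxy
  calc ∑ k ∈ range 4, 1 / (1 - (ω ^ k * x + (-ω) ^ k * y) * b)
      = (1 / (1 - a) + 1 / (1 + a)) + (1 / (1 - c) + 1 / (1 + c)) := by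
        simp only [sum_range_succ, sum_range_zero, e₀, e₁, e₂, e₃]; ring
    _ = 2 / (1 - a ^ 2) + 2 / (1 - c ^ 2) := by
        rw [one_div_one_sub_add_one_div_one_add ha₁ ha₂,
          one_div_one_sub_add_one_div_one_add hc₁ hc₂]
    _ = 4 * (1 - 2 * b ^ 2) / (1 - 4 * b ^ 2 + 2 * b ^ 4 - b ^ 4 * (x ^ 4 + y ^ 4)) := by
        rw [div_add_div _ _ ha hc, hden, ha_sq, hc_sq]; ring

end

theorem stmt4_general (z b : ℂ) (hz : z ≠ 0)
    (h1 : ∀ k ∈ Finset.range 4,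
      1 - (Complex.I ^ k * z + Complex.I⁻¹ ^ k * z⁻¹) * b ≠ 0) :
    (1 / 4) * ∑ k ∈ Finset.range 4,
        1 / (1 - (Complex.I ^ k * z + Complex.I⁻¹ ^ k * z⁻¹) * b)
      = (1 - 2 * b ^ 2) / (1 - 4 * b ^ 2 + 2 * b ^ 4 - b ^ 4 * (z ^ 4 + (z⁻¹) ^ 4)) := by
  rw [sum_range_four_one_div_one_sub_mul Complex.I_sq (mul_inv_cancel₀ hz) h1]
  ring

/-- n = 4 case: for `z ≠ 0`, whenever all denominators are nonzero,
`(1/4) Σ_{k=0}^{3} 1/(1 - (i^k z + i^{-k} z⁻¹) b)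
  = (1 - 2b²)/(1 - 4b² + 2b⁴ - b⁴(z⁴ + z⁻⁴))`. -/
theorem stmt4 (z b : ℂ) (hz : z ≠ 0)
    (h1 : ∀ k ∈ Finset.range 4,
      1 - (Complex.I ^ k * z + Complex.I⁻¹ ^ k * z⁻¹) * b ≠ 0)
    (h2 : 1 - 4 * b ^ 2 + 2 * b ^ 4 - b ^ 4 * (z ^ 4 + (z⁻¹) ^ 4) ≠ 0) :
    (1 / 4) * ∑ k ∈ Finset.range 4,
        1 / (1 - (Complex.I ^ k * z + Complex.I⁻¹ ^ k * z⁻¹) * b)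
      = (1 - 2 * b ^ 2) / (1 - 4 * b ^ 2 + 2 * b ^ 4 - b ^ 4 * (z ^ 4 + (z⁻¹) ^ 4)) :=
  stmt4_general z b hz h1
end

section
/- For ζ ∈ ℂ small and nonzero, let z_3 = (1 - 2N^2ζ^2 - √(1-4N^2ζ^2))/(2N^2ζ^2), z_4 = (1 - 2N^2ζ^2 + √(1-4N^2ζ^2))/(2N^2ζ^2), z_5 = (1 - 8(N-1)ζ^2 - √(1-16(N-1)ζ^2))/(8(N-1)ζ^2), z_6 = (1 - 8(N-1)ζ^2 + √(1-16(N-1)ζ^2))/(8(N-1)ζ^2). Then (z_3 - z_5)(z_6 - z_3) = ((N-2)^2/(4N^2(N-1)ζ^2)) · z_3. -/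
/-!
`z₃` is a root of `-a z² + (1 - 2a) z - a` with `a = N²ζ²`, while `z₅, z₆` are the two roots of
the same quadratic with `b = 4(N-1)ζ²` in place of `a`. Hence `(z₃ - z₅)(z₆ - z₃)` is that second
quadratic evaluated at `z₃`, divided by `b`, and subtracting the first (which vanishes at `z₃`)
leaves `(1/b - 1/a) z₃ = (a - b)/(ab) · z₃`; finally `a - b = (N-2)²ζ²`.
-/

section ReciprocalQuadratic

variable {K : Type*} [Field K]

def reciprocalQuadratic (a z : K) : K := -a * z ^ 2 + (1 - 2 * a) * z - a

lemma reciprocalQuadratic_eq_zero [NeZero (2 : K)] {a s z : K} (ha : a ≠ 0)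
    (hs : s * s = 1 - 4 * a) (hz : z = (1 - 2 * a - s) / (2 * a)) :
    reciprocalQuadratic a z = 0 := by
  have hdiscrim : discrim (-a) (1 - 2 * a) (-a) = s * s := by rw [discrim, hs]; ring
  have hroot := (quadratic_eq_zero_iff (neg_ne_zero.mpr ha) hdiscrim z).mpr <| .inl <| by
    rw [hz, mul_neg, div_neg, ← neg_div]
    ring
  rw [reciprocalQuadratic, ← hroot]
  ring

lemma sub_mul_sub_eq_reciprocalQuadratic_div [NeZero (2 : K)] {b t : K} (hb : b ≠ 0)
    (ht : t * t = 1 - 4 * b) (z : K) :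
    (z - (1 - 2 * b - t) / (2 * b)) * ((1 - 2 * b + t) / (2 * b) - z) =
      reciprocalQuadratic b z / b := by
  rw [reciprocalQuadratic]
  field_simp
  linear_combination ht

lemma reciprocalQuadratic_div_of_eq_zero {a b z : K} (ha : a ≠ 0) (hb : b ≠ 0)
    (hz : reciprocalQuadratic a z = 0) :
    reciprocalQuadratic b z / b = (a - b) / (a * b) * z := by
  rw [reciprocalQuadratic] at hz ⊢
  field_simp
  linear_combination b * hz

end ReciprocalQuadratic

lemma Complex.cpow_half_mul_self (x : ℂ) : x ^ ((1 : ℂ) / 2) * x ^ ((1 : ℂ) / 2) = x := by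
  rw [one_div, ← sq, Complex.cpow_ofNat_inv_pow]

theorem stmt9_general (N : ℕ) (hN : 2 ≤ N) (ζ : ℂ) (hζ : ζ ≠ 0) :
    ∀ s t z3 z4 z5 z6 : ℂ,
      s = (1 - 4 * (N : ℂ) ^ 2 * ζ ^ 2) ^ ((1 : ℂ) / 2) →
      t = (1 - 16 * ((N : ℂ) - 1) * ζ ^ 2) ^ ((1 : ℂ) / 2) →
      z3 = (1 - 2 * (N : ℂ) ^ 2 * ζ ^ 2 - s) / (2 * (N : ℂ) ^ 2 * ζ ^ 2) →
      z4 = (1 - 2 * (N : ℂ) ^ 2 * ζ ^ 2 + s) / (2 * (N : ℂ) ^ 2 * ζ ^ 2) →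
      z5 = (1 - 8 * ((N : ℂ) - 1) * ζ ^ 2 - t) / (8 * ((N : ℂ) - 1) * ζ ^ 2) →
      z6 = (1 - 8 * ((N : ℂ) - 1) * ζ ^ 2 + t) / (8 * ((N : ℂ) - 1) * ζ ^ 2) →
      (z3 - z5) * (z6 - z3)
        = (((N : ℂ) - 2) ^ 2 / (4 * (N : ℂ) ^ 2 * ((N : ℂ) - 1) * ζ ^ 2)) * z3 := by
  intro s t z3 _ z5 z6 hs ht h3 _ h5 h6
  have hN0 : (N : ℂ) ≠ 0 := Nat.cast_ne_zero.mpr (by omega)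
  have hN1 : (N : ℂ) - 1 ≠ 0 := by
    rw [sub_ne_zero, ← Nat.cast_one, Ne, Nat.cast_inj]
    omega
  have ha : (N : ℂ) ^ 2 * ζ ^ 2 ≠ 0 := by positivity
  have hb : 4 * ((N : ℂ) - 1) * ζ ^ 2 ≠ 0 := by simp [hN1, hζ]
  have hs2 : s * s = 1 - 4 * ((N : ℂ) ^ 2 * ζ ^ 2) := by rw [hs, Complex.cpow_half_mul_self]; ring
  have ht2 : t * t = 1 - 4 * (4 * ((N : ℂ) - 1) * ζ ^ 2) := by
    rw [ht, Complex.cpow_half_mul_self]; ring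
  have hz3 := reciprocalQuadratic_eq_zero (z := z3) ha hs2 (by rw [h3]; ring)
  calc (z3 - z5) * (z6 - z3)
      = reciprocalQuadratic (4 * ((N : ℂ) - 1) * ζ ^ 2) z3 / (4 * ((N : ℂ) - 1) * ζ ^ 2) := by
        rw [← sub_mul_sub_eq_reciprocalQuadratic_div hb ht2, h5, h6]
        ring_nf
    _ = _ := reciprocalQuadratic_div_of_eq_zero ha hb hz3
    _ = _ := by
        congr 1
        field_simp
        ring

/-- Key cancellation identity for `G_{2,…,2}`: with `z₃, z₄, z₅, z₆` the indicated roots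
(defined via the principal square root), `(z₃ - z₅)(z₆ - z₃) = ((N-2)²/(4N²(N-1)ζ²))·z₃`. -/
theorem stmt9 (N : ℕ) (hN : 2 ≤ N) (ζ : ℂ) (hζ : ζ ≠ 0)
    (hsmall : ‖ζ‖ < 1 / (4 * N)) :
    ∀ s t z3 z4 z5 z6 : ℂ,
      s = (1 - 4 * (N : ℂ) ^ 2 * ζ ^ 2) ^ ((1 : ℂ) / 2) →
      t = (1 - 16 * ((N : ℂ) - 1) * ζ ^ 2) ^ ((1 : ℂ) / 2) →
      z3 = (1 - 2 * (N : ℂ) ^ 2 * ζ ^ 2 - s) / (2 * (N : ℂ) ^ 2 * ζ ^ 2) →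
      z4 = (1 - 2 * (N : ℂ) ^ 2 * ζ ^ 2 + s) / (2 * (N : ℂ) ^ 2 * ζ ^ 2) →
      z5 = (1 - 8 * ((N : ℂ) - 1) * ζ ^ 2 - t) / (8 * ((N : ℂ) - 1) * ζ ^ 2) →
      z6 = (1 - 8 * ((N : ℂ) - 1) * ζ ^ 2 + t) / (8 * ((N : ℂ) - 1) * ζ ^ 2) →
      (z3 - z5) * (z6 - z3)
        = (((N : ℂ) - 2) ^ 2 / (4 * (N : ℂ) ^ 2 * ((N : ℂ) - 1) * ζ ^ 2)) * z3 :=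
  stmt9_general N hN ζ hζ
end

section
/- Let C(b) = b/(1-(2+ξ)b^2), a formal power series over ℚ[ξ], and let W(b) be its compositional inverse power series. Then the series R(b) = 1/W(b) - 1/b, which is a genuine power series since W(b) = b + O(b^3), satisfies bR^2 + R - b(2+ξ) = 0. -/
/-- Derivation of `Q₂` from `C₂`: over `ℚ[ξ]`, the Cauchy transform
`C(b) = b/(1 - (2+ξ)b²)` has a compositional inverse `W` (characterized by `W(0) = 0` and
`C(W(b)) = b`, i.e. `b(1 - (2+ξ)W²) = W`), and the R-transform
`R(b) = 1/W(b) - 1/b` (a genuine power series, characterized by `bWR = b - W`)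
satisfies `bR² + R - b(2+ξ) = 0`. -/
theorem stmt18 (W R : PowerSeries (Polynomial ℚ))
    (hW0 : PowerSeries.constantCoeff W = 0)
    (hW : PowerSeries.X * (1 - PowerSeries.C (2 + Polynomial.X : Polynomial ℚ) * W ^ 2) = W)
    (hR : PowerSeries.X * W * R = PowerSeries.X - W) :
    PowerSeries.X * R ^ 2 + R
      - PowerSeries.X * PowerSeries.C (2 + Polynomial.X : Polynomial ℚ) = 0 := by
  set c := PowerSeries.C (2 + Polynomial.X : Polynomial ℚ) with hcdef
  have hXne : (PowerSeries.X : PowerSeries (Polynomial ℚ)) ≠ 0 := PowerSeries.X_ne_zero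
  have hWne : W ≠ 0 := by
    intro h
    apply hXne
    have h2 := hW
    rw [h] at h2
    simpa using h2
  have hRW : R = c * W := by
    have h1 : PowerSeries.X * W * R = PowerSeries.X * W * (c * W) := by
      rw [hR]
      linear_combination hW
    exact mul_left_cancel₀ (mul_ne_zero hXne hWne) h1
  rw [hRW]
  linear_combination (-c) * hW
end
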